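/- Let B ⊂ (0,1). Then B ⊂ θ(B) if and only if B_e^c ∩ B_b = ∅. -/
import Mathlib


open Set MeasureTheory Filter

open Classical in
/-- The doubling map `θ` on `[0,1)`: `θ(ξ) = 2ξ` for `ξ < 1/2`, `2ξ − 1` otherwise. -/
noncomputable def theta (ξ : ℝ) : ℝ := if ξ < 1/2 then 2*ξ else 2*ξ - 1

open Classical in
/-- `ξ* = ξ + 1/2` for `ξ ∈ [0,1/2]` and `ξ − 1/2` for `ξ ∈ (1/2,1]`. -/
noncomputable def starR (ξ : ℝ) : ℝ := if ξ ≤ 1/2 then ξ + 1/2 else ξ - 1/2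


/-- The exit set `B_e^c = {ξ/2 + j/2 : ξ ∈ B, j ∈ {0,1}} ∩ ([0,1] \ B)`. -/
def BeI (B : Set ℝ) : Set ℝ :=
  {y | ∃ ξ ∈ B, y = ξ/2 ∨ y = ξ/2 + 1/2} ∩ (Set.Icc (0:ℝ) 1 \ B)

/-- The barrier set `B_b = (B_e^c)*`. -/
noncomputable def BbI (B : Set ℝ) : Set ℝ := starR '' BeI B


/-- For `B ⊂ (0,1)`: `B ⊆ θ(B)` iff `B_e^c ∩ B_b = ∅`. -/
theorem subset_theta_image_iff (B : Set ℝ) (hB : B ⊆ Set.Ioo 0 1) :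
    B ⊆ theta '' B ↔ BeI B ∩ BbI B = ∅ := by
  constructor
  · intro h
    ext y
    simp only [Set.mem_inter_iff, Set.mem_empty_iff_false, iff_false, not_and]
    rintro ⟨⟨ξ, hξB, hy⟩, hy01, hyB⟩ ⟨z, ⟨⟨η, hηB, hz⟩, hz01, hzB⟩, hstar⟩
    obtain ⟨b, hbB, hbθ⟩ := h hηB
    obtain ⟨hη0, hη1⟩ := hB hηB
    obtain ⟨hb0, hb1⟩ := hB hbB
    have hb : b = η/2 ∨ b = η/2 + 1/2 := by
      unfold theta at hbθ
      split_ifs at hbθ with h'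
      · left; linarith
      · right; linarith
    have hsz : (z = η/2 ∧ y = η/2 + 1/2) ∨ (z = η/2 + 1/2 ∧ y = η/2) := by
      rcases hz with hz | hz
      · refine Or.inl ⟨hz, ?_⟩
        rw [← hstar]; unfold starR; rw [hz]
        rw [if_pos (by linarith)]
      · refine Or.inr ⟨hz, ?_⟩
        rw [← hstar]; unfold starR; rw [hz]
        rw [if_neg (by push_neg; linarith)]
        ring
    rcases hb with hb | hb <;> rcases hsz with ⟨h1, h2⟩ | ⟨h1, h2⟩ <;>
      subst hb <;> subst h1 <;> subst h2 <;>
      first | exact hzB hbB | exact hyB hbB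
  · intro h η hηB
    obtain ⟨hη0, hη1⟩ := hB hηB
    by_cases ha : η/2 ∈ B
    · exact ⟨η/2, ha, by unfold theta; rw [if_pos (by linarith)]; ring⟩
    by_cases ha' : η/2 + 1/2 ∈ B
    · exact ⟨η/2 + 1/2, ha', by unfold theta; rw [if_neg (by push_neg; linarith)]; ring⟩
    exfalso
    have hmem : η/2 + 1/2 ∈ BeI B ∩ BbI B := by
      refine ⟨⟨⟨η, hηB, Or.inr rfl⟩, ⟨by linarith, by linarith⟩, ha'⟩, ?_⟩
      refine ⟨η/2, ⟨⟨η, hηB, Or.inl rfl⟩, ⟨by linarith, by linarith⟩, ha⟩, ?_⟩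
      unfold starR; rw [if_pos (by linarith)]
    rw [h] at hmem
    exact hmem
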